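/- arXiv:1504.01311 — 4 statements merged into one kernel-verified Lean document; each statement's English description precedes it below -/
import Mathlib

section
/- Let (G, ℒ, φ, ψ) be a pairwise MRF instance on a finite graph with all φ_v and ψ_{uv} nonnegative, let k ≥ 1 be an integer, and let ℓ : E → ℕ be any function assigning a level to each edge. For j ∈ {0,…,k−1}, let H_j(x) = H(x) − ∑_{{u,v}∈E, ℓ({u,v}) ≡ j (mod k)} ψ_{uv}(x_u, x_v), and suppose x_j : V → ℒ maximizes H_j over all assignments. Then max_{0 ≤ j < k} H(x_j) ≥ (1 − 1/k) · max_x H(x). -/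
open Finset

/-- The objective of a pairwise MRF instance: `H(x) = ∑_v φ_v(x_v) + ∑_{{u,v}∈E} ψ_{uv}(x_u,x_v)`,
where the sum over unordered edges is written as half the sum over ordered adjacent pairs. -/
noncomputable def mrfH {V L : Type*} [Fintype V] (G : SimpleGraph V)
    [DecidableRel G.Adj] (φ : V → L → ℝ) (ψ : V → V → L → L → ℝ)
    (x : V → L) : ℝ :=
  ∑ v, φ v (x v) +
    (∑ u, ∑ v, if G.Adj u v then ψ u v (x u) (x v) else 0) / 2

/-- `∑_{{u,v}∈E, ℓ({u,v}) ≡ j (mod k)} ψ_{uv}(x_u, x_v)`: the total `ψ`-value on the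
edges whose level is congruent to `j` modulo `k`. -/
noncomputable def deletedSum {V L : Type*} [Fintype V] (G : SimpleGraph V)
    [DecidableRel G.Adj] (ψ : V → V → L → L → ℝ) (ℓ : Sym2 V → ℕ)
    (k j : ℕ) (x : V → L) : ℝ :=
  (∑ u, ∑ v, if G.Adj u v ∧ ℓ s(u, v) % k = j then ψ u v (x u) (x v) else 0) / 2

lemma deletedSum_nonneg {V L : Type*} [Fintype V] (G : SimpleGraph V)
    [DecidableRel G.Adj] (ψ : V → V → L → L → ℝ)
    (hψ0 : ∀ u v a b, G.Adj u v → 0 ≤ ψ u v a b) (ℓ : Sym2 V → ℕ)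
    (k j : ℕ) (x : V → L) : 0 ≤ deletedSum G ψ ℓ k j x := by
  unfold deletedSum
  apply div_nonneg _ (by norm_num)
  apply Finset.sum_nonneg; intro u _
  apply Finset.sum_nonneg; intro v _
  split
  · next h => exact hψ0 u v _ _ h.1
  · exact le_refl 0

lemma sum_deletedSum {V L : Type*} [Fintype V] (G : SimpleGraph V)
    [DecidableRel G.Adj] (ψ : V → V → L → L → ℝ) (ℓ : Sym2 V → ℕ)
    (k : ℕ) (hk : 1 ≤ k) (x : V → L) :
    ∑ j ∈ Finset.range k, deletedSum G ψ ℓ k j x =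
      (∑ u, ∑ v, if G.Adj u v then ψ u v (x u) (x v) else 0) / 2 := by
  unfold deletedSum
  rw [← Finset.sum_div]
  congr 1
  rw [Finset.sum_comm]
  refine Finset.sum_congr rfl (fun u _ => ?_)
  rw [Finset.sum_comm]
  refine Finset.sum_congr rfl (fun v _ => ?_)
  have : ∀ j, (if G.Adj u v ∧ ℓ s(u, v) % k = j then ψ u v (x u) (x v) else 0)
      = if G.Adj u v then (if ℓ s(u, v) % k = j then ψ u v (x u) (x v) else 0) else 0 := by
    intro j
    by_cases h : G.Adj u v <;> simp [h]
  simp only [this]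
  by_cases h : G.Adj u v
  · simp only [if_pos h]
    rw [Finset.sum_ite_eq (Finset.range k) (ℓ s(u, v) % k)]
    simp [Nat.mod_lt _ (by omega : 0 < k)]
  · simp [h]

/-- Baker-style analysis: if ``x_j`` maximizes the objective `H_j` with the edges at
levels `≡ j (mod k)` deleted, then the best of the `k` candidates is a
`(1 - 1/k)`-approximation of the optimum. -/
theorem stmt6 {V L : Type*} [Fintype V] [DecidableEq V] [Fintype L] [Nonempty L]
    (G : SimpleGraph V) [DecidableRel G.Adj]
    (φ : V → L → ℝ) (ψ : V → V → L → L → ℝ)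
    (hφ : ∀ v a, 0 ≤ φ v a)
    (hψ0 : ∀ u v a b, G.Adj u v → 0 ≤ ψ u v a b)
    (hψ : ∀ u v a b, ψ u v a b = ψ v u b a)
    (k : ℕ) (hk : 1 ≤ k) (ℓ : Sym2 V → ℕ)
    (xj : ℕ → V → L)
    (hxj : ∀ j < k, ∀ y : V → L,
      mrfH G φ ψ y - deletedSum G ψ ℓ k j y ≤
        mrfH G φ ψ (xj j) - deletedSum G ψ ℓ k j (xj j)) :
    ∃ j < k,
      (1 - 1 / (k : ℝ)) * (⨆ x : V → L, mrfH G φ ψ x) ≤ mrfH G φ ψ (xj j) := by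
  obtain ⟨xs, hxs⟩ := Finite.exists_max (mrfH G φ ψ)
  have hsup : (⨆ x : V → L, mrfH G φ ψ x) = mrfH G φ ψ xs := by
    apply le_antisymm
    · exact ciSup_le hxs
    · exact le_ciSup ⟨mrfH G φ ψ xs, fun r ⟨y, hy⟩ => hy ▸ hxs y⟩ xs
  have hkR : (0 : ℝ) < k := by exact_mod_cast (by omega : 0 < k)
  -- pigeonhole
  have hsum : ∑ j ∈ Finset.range k, deletedSum G ψ ℓ k j xs ≤
      ∑ _j ∈ Finset.range k, mrfH G φ ψ xs / k := by
    rw [sum_deletedSum G ψ ℓ k hk xs, Finset.sum_const, Finset.card_range,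
      nsmul_eq_mul, mul_div_cancel₀ _ (ne_of_gt hkR)]
    unfold mrfH
    have : 0 ≤ ∑ v, φ v (xs v) :=
      Finset.sum_nonneg fun v _ => hφ v _
    linarith
  obtain ⟨j, hj, hjle⟩ := Finset.exists_le_of_sum_le ⟨0, Finset.mem_range.mpr (by omega)⟩ hsum
  rw [Finset.mem_range] at hj
  refine ⟨j, hj, ?_⟩
  rw [hsup]
  have h1 := hxj j hj xs
  have h2 := deletedSum_nonneg G ψ hψ0 ℓ k j (xj j)
  have : (1 - 1 / (k : ℝ)) * mrfH G φ ψ xs = mrfH G φ ψ xs - mrfH G φ ψ xs / k := by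
    field_simp
  rw [this]
  linarith
end

section
/- Let (G, ℒ, φ, ψ) be a pairwise MRF instance on a finite graph with all ψ_{uv} nonnegative, let k ≥ 1 and ℓ : E → ℕ be given, and for j ∈ {0,…,k−1} let H_j(x) = H(x) − ∑_{{u,v}∈E, ℓ({u,v}) ≡ j (mod k)} ψ_{uv}(x_u, x_v). If x_j maximizes H_j over all assignments and x* is any assignment, then H(x_j) ≥ H(x*) − ∑_{{u,v}∈E, ℓ({u,v}) ≡ j (mod k)} ψ_{uv}(x*_u, x*_v). -/
open Finset

/-- If `x_j` maximizes `H_j = H - (deleted edge terms)`, then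
`H(x_j) ≥ H(x*) - ∑_{deleted edges} ψ(x*)` for any assignment `x*`. -/
theorem stmt7 {V L : Type*} [Fintype V]
    (G : SimpleGraph V) [DecidableRel G.Adj]
    (φ : V → L → ℝ) (ψ : V → V → L → L → ℝ)
    (hψ0 : ∀ u v a b, G.Adj u v → 0 ≤ ψ u v a b)
    (hψ : ∀ u v a b, ψ u v a b = ψ v u b a)
    (k : ℕ) (hk : 1 ≤ k) (ℓ : Sym2 V → ℕ)
    (j : ℕ) (hj : j < k)
    (xj : V → L)
    (hxj : ∀ y : V → L,
      mrfH G φ ψ y - deletedSum G ψ ℓ k j y ≤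
        mrfH G φ ψ xj - deletedSum G ψ ℓ k j xj)
    (xstar : V → L) :
    mrfH G φ ψ xj ≥ mrfH G φ ψ xstar - deletedSum G ψ ℓ k j xstar := by
  have hD : 0 ≤ deletedSum G ψ ℓ k j xj := by
    unfold deletedSum
    apply div_nonneg _ (by norm_num)
    apply Finset.sum_nonneg; intro u _
    apply Finset.sum_nonneg; intro v _
    split
    · exact hψ0 u v _ _ (by tauto)
    · exact le_refl 0
  have := hxj xstar
  linarith
end

section
/- Let (G, ℒ, φ, ψ) be a pairwise MRF instance on a finite graph, and suppose V = V₁ ∪ V₂ with I = V₁ ∩ V₂, and the edge set partitions as E = E₁ ⊎ E₂ where every edge of E₁ has both endpoints in V₁ and every edge of E₂ has both endpoints in V₂. For i = 1,2 and an assignment y : V_i → ℒ, let H_i(y) = ∑_{v∈V_i} φ_v(y_v) + ∑_{{u,v}∈E_i} ψ_{uv}(y_u, y_v). Then: (a) for every assignment x : V → ℒ, H(x) = H₁(x|_{V₁}) + H₂(x|_{V₂}) − ∑_{v∈I} φ_v(x_v); and (b) max_{x : V → ℒ} H(x) = max_{σ : I → ℒ} [ max_{x₁ : V₁ → ℒ,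 x₁|_I = σ} H₁(x₁) + max_{x₂ : V₂ → ℒ, x₂|_I = σ} H₂(x₂) − ∑_{v∈I} φ_v(σ(v)) ]. -/
open Finset

lemma sum_restrict' {V : Type*} [Fintype V] [DecidableEq V] (S : Finset V) (f : V → V → ℝ)
    (h : ∀ u v, f u v ≠ 0 → u ∈ S ∧ v ∈ S) :
    ∑ u, ∑ v, f u v = ∑ u ∈ S, ∑ v ∈ S, f u v := by
  rw [← Finset.sum_subset S.subset_univ
      (fun u _ hu => Finset.sum_eq_zero fun v _ => by
        by_contra hne; exact hu (h u v hne).1)]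
  refine Finset.sum_congr rfl fun u hu => ?_
  rw [← Finset.sum_subset S.subset_univ
      (fun v _ hv => by by_contra hne; exact hv (h u v hne).2)]


/-- The combination step of the dynamic program over a branch decomposition:
`V = V₁ ∪ V₂` with boundary `I = V₁ ∩ V₂`, and the edge set is partitioned into `E₁`
(edges with `e₁ = true`, lying inside `V₁`) and `E₂` (edges with `e₁ = false`, lying
inside `V₂`).  Part (a): `H(x) = H₁(x|V₁) + H₂(x|V₂) - ∑_{v ∈ I} φ_v(x_v)`.
Part (b): the maximum of `H` is obtained by maximizing, over assignments `σ` to the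
boundary `I`, the sum of the constrained maxima of `H₁` and `H₂` minus the doubly
counted vertex terms on `I`. -/
theorem stmt10 {V L : Type*} [Fintype V] [DecidableEq V] [Fintype L] [Nonempty L]
    (G : SimpleGraph V) [DecidableRel G.Adj]
    (φ : V → L → ℝ) (ψ : V → V → L → L → ℝ)
    (hψ : ∀ u v a b, ψ u v a b = ψ v u b a)
    (V₁ V₂ : Finset V) (hcover : V₁ ∪ V₂ = Finset.univ)
    (e₁ : V → V → Bool) (he₁ : ∀ u v, e₁ u v = e₁ v u)
    (hE₁ : ∀ u v, G.Adj u v → e₁ u v = true → u ∈ V₁ ∧ v ∈ V₁)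
    (hE₂ : ∀ u v, G.Adj u v → e₁ u v = false → u ∈ V₂ ∧ v ∈ V₂) :
    let H₁ : ({v // v ∈ V₁} → L) → ℝ := fun y =>
      ∑ v ∈ V₁.attach, φ v.1 (y v) +
        (∑ u ∈ V₁.attach, ∑ v ∈ V₁.attach,
          if G.Adj u.1 v.1 ∧ e₁ u.1 v.1 = true then ψ u.1 v.1 (y u) (y v) else 0) / 2
    let H₂ : ({v // v ∈ V₂} → L) → ℝ := fun y =>
      ∑ v ∈ V₂.attach, φ v.1 (y v) +
        (∑ u ∈ V₂.attach, ∑ v ∈ V₂.attach,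
          if G.Adj u.1 v.1 ∧ e₁ u.1 v.1 = false then ψ u.1 v.1 (y u) (y v) else 0) / 2
    (∀ x : V → L,
      mrfH G φ ψ x =
        H₁ (fun v => x v.1) + H₂ (fun v => x v.1) - ∑ v ∈ V₁ ∩ V₂, φ v (x v)) ∧
    (⨆ x : V → L, mrfH G φ ψ x) =
      ⨆ σ : {v // v ∈ V₁ ∩ V₂} → L,
        ((⨆ y : {y : {v // v ∈ V₁} → L //
            ∀ (v : V) (hv : v ∈ V₁ ∩ V₂),
              y ⟨v, (Finset.mem_inter.mp hv).1⟩ = σ ⟨v, hv⟩}, H₁ y.1) +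
         (⨆ z : {z : {v // v ∈ V₂} → L //
            ∀ (v : V) (hv : v ∈ V₁ ∩ V₂),
              z ⟨v, (Finset.mem_inter.mp hv).2⟩ = σ ⟨v, hv⟩}, H₂ z.1) -
         ∑ v ∈ (V₁ ∩ V₂).attach, φ v.1 (σ v)) := by
  intro H₁ H₂
  -- Part (a)
  have parta : ∀ x : V → L,
      mrfH G φ ψ x =
        H₁ (fun v => x v.1) + H₂ (fun v => x v.1) - ∑ v ∈ V₁ ∩ V₂, φ v (x v) := by
    intro x
    have hA : (∑ v, φ v (x v)) =
        (∑ v ∈ V₁, φ v (x v)) + (∑ v ∈ V₂, φ v (x v)) - ∑ v ∈ V₁ ∩ V₂, φ v (x v) := by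
      have := Finset.sum_union_inter (s₁ := V₁) (s₂ := V₂) (f := fun v => φ v (x v))
      rw [hcover] at this
      linarith
    have hB : (∑ u, ∑ v, if G.Adj u v then ψ u v (x u) (x v) else 0) =
        (∑ u, ∑ v, if G.Adj u v ∧ e₁ u v = true then ψ u v (x u) (x v) else 0) +
        (∑ u, ∑ v, if G.Adj u v ∧ e₁ u v = false then ψ u v (x u) (x v) else 0) := by
      rw [← Finset.sum_add_distrib]
      refine Finset.sum_congr rfl fun u _ => ?_
      rw [← Finset.sum_add_distrib]
      refine Finset.sum_congr rfl fun v _ => ?_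
      by_cases h : G.Adj u v
      · cases h2 : e₁ u v <;> simp [h, h2]
      · simp [h]
    have hB₁ : (∑ u, ∑ v, if G.Adj u v ∧ e₁ u v = true then ψ u v (x u) (x v) else 0) =
        ∑ u ∈ V₁.attach, ∑ v ∈ V₁.attach,
          if G.Adj u.1 v.1 ∧ e₁ u.1 v.1 = true then ψ u.1 v.1 (x u.1) (x v.1) else 0 := by
      rw [sum_restrict' V₁ _ (fun u v hne => by
        by_cases h : G.Adj u v ∧ e₁ u v = true
        · exact hE₁ u v h.1 h.2
        · simp [h] at hne)]
      rw [← Finset.sum_attach V₁]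
      refine Finset.sum_congr rfl fun u _ => ?_
      rw [← Finset.sum_attach V₁]
    have hB₂ : (∑ u, ∑ v, if G.Adj u v ∧ e₁ u v = false then ψ u v (x u) (x v) else 0) =
        ∑ u ∈ V₂.attach, ∑ v ∈ V₂.attach,
          if G.Adj u.1 v.1 ∧ e₁ u.1 v.1 = false then ψ u.1 v.1 (x u.1) (x v.1) else 0 := by
      rw [sum_restrict' V₂ _ (fun u v hne => by
        by_cases h : G.Adj u v ∧ e₁ u v = false
        · exact hE₂ u v h.1 h.2
        · simp [h] at hne)]
      rw [← Finset.sum_attach V₂]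
      refine Finset.sum_congr rfl fun u _ => ?_
      rw [← Finset.sum_attach V₂]
    have hA₁ : (∑ v ∈ V₁.attach, φ v.1 (x v.1)) = ∑ v ∈ V₁, φ v (x v) :=
      Finset.sum_attach V₁ (fun v => φ v (x v))
    have hA₂ : (∑ v ∈ V₂.attach, φ v.1 (x v.1)) = ∑ v ∈ V₂, φ v (x v) :=
      Finset.sum_attach V₂ (fun v => φ v (x v))
    show (∑ v, φ v (x v)) + _ / 2 = _
    rw [hB, hB₁, hB₂, hA]
    simp only [H₁, H₂]
    rw [hA₁, hA₂]
    ring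
  refine ⟨parta, ?_⟩
  -- Part (b)
  apply le_antisymm
  · refine ciSup_le fun x => ?_
    set σ : {v // v ∈ V₁ ∩ V₂} → L := fun v => x v.1 with hσ
    have hy : ∀ (v : V) (hv : v ∈ V₁ ∩ V₂),
        (fun v : {v // v ∈ V₁} => x v.1) ⟨v, (Finset.mem_inter.mp hv).1⟩ = σ ⟨v, hv⟩ :=
      fun v hv => rfl
    have hz : ∀ (v : V) (hv : v ∈ V₁ ∩ V₂),
        (fun v : {v // v ∈ V₂} => x v.1) ⟨v, (Finset.mem_inter.mp hv).2⟩ = σ ⟨v, hv⟩ :=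
      fun v hv => rfl
    have hle : mrfH G φ ψ x ≤
        (⨆ y : {y : {v // v ∈ V₁} → L //
            ∀ (v : V) (hv : v ∈ V₁ ∩ V₂),
              y ⟨v, (Finset.mem_inter.mp hv).1⟩ = σ ⟨v, hv⟩}, H₁ y.1) +
        (⨆ z : {z : {v // v ∈ V₂} → L //
            ∀ (v : V) (hv : v ∈ V₁ ∩ V₂),
              z ⟨v, (Finset.mem_inter.mp hv).2⟩ = σ ⟨v, hv⟩}, H₂ z.1) -
        ∑ v ∈ (V₁ ∩ V₂).attach, φ v.1 (σ v) := by
      rw [parta x]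
      have h1 := le_ciSup (f := fun y : {y : {v // v ∈ V₁} → L //
            ∀ (v : V) (hv : v ∈ V₁ ∩ V₂),
              y ⟨v, (Finset.mem_inter.mp hv).1⟩ = σ ⟨v, hv⟩} => H₁ y.1)
        (Set.Finite.bddAbove (Set.finite_range _)) (⟨fun v => x v.1, hy⟩)
      have h2 := le_ciSup (f := fun z : {z : {v // v ∈ V₂} → L //
            ∀ (v : V) (hv : v ∈ V₁ ∩ V₂),
              z ⟨v, (Finset.mem_inter.mp hv).2⟩ = σ ⟨v, hv⟩} => H₂ z.1)
        (Set.Finite.bddAbove (Set.finite_range _)) (⟨fun v => x v.1, hz⟩)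
      have h3 : (∑ v ∈ V₁ ∩ V₂, φ v (x v)) = ∑ v ∈ (V₁ ∩ V₂).attach, φ v.1 (σ v) :=
        (Finset.sum_attach (V₁ ∩ V₂) (fun v => φ v (x v))).symm
      linarith
    refine hle.trans ?_
    exact le_ciSup (f := fun σ' : {v // v ∈ V₁ ∩ V₂} → L =>
        ((⨆ y : {y : {v // v ∈ V₁} → L //
            ∀ (v : V) (hv : v ∈ V₁ ∩ V₂),
              y ⟨v, (Finset.mem_inter.mp hv).1⟩ = σ' ⟨v, hv⟩}, H₁ y.1) +
         (⨆ z : {z : {v // v ∈ V₂} → L //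
            ∀ (v : V) (hv : v ∈ V₁ ∩ V₂),
              z ⟨v, (Finset.mem_inter.mp hv).2⟩ = σ' ⟨v, hv⟩}, H₂ z.1) -
         ∑ v ∈ (V₁ ∩ V₂).attach, φ v.1 (σ' v)))
      (Set.Finite.bddAbove (Set.finite_range _)) σ
  · refine ciSup_le fun σ => ?_
    -- nonempty instances for constrained subtypes
    haveI hne1 : Nonempty {y : {v // v ∈ V₁} → L //
        ∀ (v : V) (hv : v ∈ V₁ ∩ V₂),
          y ⟨v, (Finset.mem_inter.mp hv).1⟩ = σ ⟨v, hv⟩} := by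
      refine ⟨⟨fun v => if h : v.1 ∈ V₁ ∩ V₂ then σ ⟨v.1, h⟩ else Classical.arbitrary L,
        fun v hv => ?_⟩⟩
      simp [hv]
    haveI hne2 : Nonempty {z : {v // v ∈ V₂} → L //
        ∀ (v : V) (hv : v ∈ V₁ ∩ V₂),
          z ⟨v, (Finset.mem_inter.mp hv).2⟩ = σ ⟨v, hv⟩} := by
      refine ⟨⟨fun v => if h : v.1 ∈ V₁ ∩ V₂ then σ ⟨v.1, h⟩ else Classical.arbitrary L,
        fun v hv => ?_⟩⟩
      simp [hv]
    obtain ⟨y, hy⟩ := Finite.exists_max (fun y : {y : {v // v ∈ V₁} → L //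
        ∀ (v : V) (hv : v ∈ V₁ ∩ V₂),
          y ⟨v, (Finset.mem_inter.mp hv).1⟩ = σ ⟨v, hv⟩} => H₁ y.1)
    obtain ⟨z, hz⟩ := Finite.exists_max (fun z : {z : {v // v ∈ V₂} → L //
        ∀ (v : V) (hv : v ∈ V₁ ∩ V₂),
          z ⟨v, (Finset.mem_inter.mp hv).2⟩ = σ ⟨v, hv⟩} => H₂ z.1)
    -- combined assignment
    have hV₂ : ∀ v : V, v ∉ V₁ → v ∈ V₂ := by
      intro v hv
      have : v ∈ V₁ ∪ V₂ := hcover ▸ Finset.mem_univ v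
      rcases Finset.mem_union.mp this with h | h
      · exact absurd h hv
      · exact h
    set x : V → L := fun v => if h : v ∈ V₁ then y.1 ⟨v, h⟩ else z.1 ⟨v, hV₂ v h⟩ with hx
    have hx1 : (fun v : {v // v ∈ V₁} => x v.1) = y.1 := by
      funext v
      simp [hx, v.2]
    have hx2 : (fun v : {v // v ∈ V₂} => x v.1) = z.1 := by
      funext v
      by_cases h : v.1 ∈ V₁
      · have hvi : v.1 ∈ V₁ ∩ V₂ := Finset.mem_inter.mpr ⟨h, v.2⟩
        have e1 := y.2 v.1 hvi
        have e2 := z.2 v.1 hvi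
        simp only [hx]
        rw [dif_pos h, e1, ← e2]
      · simp [hx, h]
    have hIsum : (∑ v ∈ V₁ ∩ V₂, φ v (x v)) = ∑ v ∈ (V₁ ∩ V₂).attach, φ v.1 (σ v) := by
      rw [← Finset.sum_attach (V₁ ∩ V₂) (fun v => φ v (x v))]
      refine Finset.sum_congr rfl fun v _ => ?_
      have hv1 : v.1 ∈ V₁ := (Finset.mem_inter.mp v.2).1
      have := y.2 v.1 v.2
      rw [hx]
      simp only [dif_pos hv1]
      rw [this]
    have key : mrfH G φ ψ x = H₁ y.1 + H₂ z.1 - ∑ v ∈ (V₁ ∩ V₂).attach, φ v.1 (σ v) := by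
      rw [parta x, hx1, hx2, hIsum]
    have h1 : (⨆ y' : {y : {v // v ∈ V₁} → L //
        ∀ (v : V) (hv : v ∈ V₁ ∩ V₂),
          y ⟨v, (Finset.mem_inter.mp hv).1⟩ = σ ⟨v, hv⟩}, H₁ y'.1) ≤ H₁ y.1 :=
      ciSup_le hy
    have h2 : (⨆ z' : {z : {v // v ∈ V₂} → L //
        ∀ (v : V) (hv : v ∈ V₁ ∩ V₂),
          z ⟨v, (Finset.mem_inter.mp hv).2⟩ = σ ⟨v, hv⟩}, H₂ z'.1) ≤ H₂ z.1 :=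
      ciSup_le hz
    have h3 : mrfH G φ ψ x ≤ ⨆ x, mrfH G φ ψ x :=
      le_ciSup (Set.Finite.bddAbove (Set.finite_range _)) x
    linarith
end

section
/- Let G = (V,E) be a finite simple graph, let c : V → C be any partition of the vertices into clusters (C a type of cluster names), and let ℒ be a finite label set. Suppose there exists f : C → ℒ such that f(c(u)) ≠ f(c(v)) for every edge {u,v} ∈ E with c(u) ≠ c(v) (i.e., a proper ℒ-coloring of the quotient graph on clusters). Then the assignment x = f ∘ c satisfies, for every edge {u,v} ∈ E: x_u = x_v if and only if c(u) = c(v). Consequently, for any edge preferences p : E → {0,1} and rewards w : E → ℝ≥0, the MRF objective of x under the correlation clustering reduction (φ ≡ 0 and ψ_{uv}(a,b) = w({u,v}) when the agreement of a and b matches the preference p({u,v}), else 0) equals the correlation clustering objective of the partition c. -/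
open Finset

open scoped Classical

/-- `sameClusterPart c e` holds when the endpoints of `e` lie in the same cluster of the
partition given by `c`. -/
def sameClusterPart {V C : Type*} (c : V → C) (e : Sym2 V) : Prop :=
  ∃ u v, e = s(u, v) ∧ c u = c v

lemma sameClusterPart_iff {V C : Type*} (c : V → C) (u v : V) :
    sameClusterPart c s(u, v) ↔ c u = c v := by
  constructor
  · rintro ⟨u', v', he, hc⟩
    rw [Sym2.eq_iff] at he
    rcases he with ⟨rfl, rfl⟩ | ⟨rfl, rfl⟩
    · exact hc
    · exact hc.symm
  · intro h; exact ⟨u, v, rfl, h⟩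

lemma double_sum_eq_two_mul_edge_sum {V : Type*} [Fintype V] [DecidableEq V]
    (G : SimpleGraph V) [DecidableRel G.Adj] (F : Sym2 V → ℝ) :
    (∑ u, ∑ v, if G.Adj u v then F s(u, v) else 0) = 2 * ∑ e ∈ G.edgeFinset, F e := by
  have h1 : (∑ u, ∑ v, if G.Adj u v then F s(u, v) else 0) = ∑ d : G.Dart, F d.edge := by
    rw [← Finset.sum_product', ← Finset.sum_filter]
    refine (Finset.sum_bij (fun d _ => d.toProd) ?_ ?_ ?_ ?_).symm
    · intro d _; simp [d.adj]
    · intro d1 _ d2 _ h; exact SimpleGraph.Dart.ext _ _ h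
    · intro p hp
      simp only [mem_filter] at hp
      exact ⟨⟨p, hp.2⟩, Finset.mem_univ _, rfl⟩
    · intro d _; rfl
  have h2 : ∑ d : G.Dart, F d.edge =
      ∑ e ∈ G.edgeFinset, ∑ d ∈ univ.filter (fun d : G.Dart => d.edge = e), F d.edge :=
    (Finset.sum_fiberwise_of_maps_to (fun d _ => by
      simp [SimpleGraph.mem_edgeFinset, SimpleGraph.Dart.edge_mem]) _).symm
  rw [h1, h2]
  rw [Finset.mul_sum]
  refine Finset.sum_congr rfl fun e he => ?_
  have hcard := G.dart_edge_fiber_card e (SimpleGraph.mem_edgeFinset.mp he)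
  have h3 : ∑ d ∈ univ.filter (fun d : G.Dart => d.edge = e), F d.edge
      = ∑ _d ∈ univ.filter (fun d : G.Dart => d.edge = e), F e :=
    Finset.sum_congr rfl fun d hd => by rw [(Finset.mem_filter.mp hd).2]
  rw [h3, Finset.sum_const, hcard]
  push_cast
  ring

/-- If `f` is a proper coloring of the quotient graph on the clusters of `c`, then the
labelling `x = f ∘ c` agrees on an edge iff `c` does, and consequently the MRF objective
of `x` under the correlation clustering reduction (with `φ ≡ 0`) equals the correlation
clustering objective of the partition `c`.  The MRF pairwise term
`∑_{{u,v}∈E} ψ_{uv}(x_u, x_v)` is written as half the sum over ordered adjacent pairs. -/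
theorem stmt13 {V C L : Type*} [Fintype V] [DecidableEq V]
    (G : SimpleGraph V) [DecidableRel G.Adj]
    (c : V → C) (f : C → L)
    (hf : ∀ u v, G.Adj u v → c u ≠ c v → f (c u) ≠ f (c v))
    (p : Sym2 V → Fin 2) (w : Sym2 V → ℝ) (hw : ∀ e, 0 ≤ w e) :
    let x : V → L := fun v => f (c v)
    (∀ u v, G.Adj u v → (x u = x v ↔ c u = c v)) ∧
    (∑ u, ∑ v, if G.Adj u v then
        (if (p s(u, v) = 0 ∧ x u = x v) ∨ (p s(u, v) = 1 ∧ x u ≠ x v)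
          then w s(u, v) else 0) else 0) / 2 =
      ∑ e ∈ G.edgeFinset,
        w e * (if (p e = 0 ∧ sameClusterPart c e) ∨ (p e = 1 ∧ ¬ sameClusterPart c e)
          then 1 else 0) := by
  intro x
  have hiff : ∀ u v, G.Adj u v → (x u = x v ↔ c u = c v) := by
    intro u v huv
    constructor
    · intro h
      by_contra hc
      exact hf u v huv hc h
    · intro h; simp only [x, h]
  refine ⟨hiff, ?_⟩
  set F : Sym2 V → ℝ := fun e =>
    w e * (if (p e = 0 ∧ sameClusterPart c e) ∨ (p e = 1 ∧ ¬ sameClusterPart c e)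
      then 1 else 0) with hF
  have key : (∑ u, ∑ v, if G.Adj u v then
        (if (p s(u, v) = 0 ∧ x u = x v) ∨ (p s(u, v) = 1 ∧ x u ≠ x v)
          then w s(u, v) else 0) else 0)
      = ∑ u, ∑ v, if G.Adj u v then F s(u, v) else 0 := by
    refine Finset.sum_congr rfl fun u _ => Finset.sum_congr rfl fun v _ => ?_
    by_cases huv : G.Adj u v
    · simp only [huv, if_true, hF]
      have hcond : ((p s(u, v) = 0 ∧ x u = x v) ∨ (p s(u, v) = 1 ∧ x u ≠ x v)) ↔
          ((p s(u, v) = 0 ∧ sameClusterPart c s(u, v)) ∨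
            (p s(u, v) = 1 ∧ ¬ sameClusterPart c s(u, v))) := by
        rw [sameClusterPart_iff, ← hiff u v huv]
      by_cases hc : (p s(u, v) = 0 ∧ x u = x v) ∨ (p s(u, v) = 1 ∧ x u ≠ x v)
      · rw [if_pos hc, if_pos (hcond.mp hc), mul_one]
      · rw [if_neg hc, if_neg (fun h => hc (hcond.mpr h)), mul_zero]
    · simp [huv]
  rw [key, double_sum_eq_two_mul_edge_sum G F]
  ring
end
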